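/- arXiv:2410.23150 — 2 statements merged into one kernel-verified Lean document; each statement's English description precedes it below -/
import Mathlib

section
/- The two-dimensional Gagliardo–Nirenberg inequality: there exists a constant a* > 0 such that for all u ∈ H^1(R^2), (∫_{R^2} |∇u|^2)(∫_{R^2} |u|^2) ≥ (a*/2) ∫_{R^2} |u|^4. -/
/-!
Ladyzhenskaya's argument. Along every horizontal line, `‖u‖²` is integrable with derivative
bounded by `2‖u‖‖Du‖`, so it vanishes at infinity and `‖u(x, y)‖² ≤ ∫ 2‖u(x', y)‖‖Du(x', y)‖ dx'`;
likewise along vertical lines. Multiplying the two bounds and integrating with Fubini gives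
`∫ ‖u‖⁴ ≤ (∫ 2‖u‖‖Du‖)²`, and Cauchy–Schwarz bounds this by `4 (∫ ‖Du‖²)(∫ ‖u‖²)`: `a* = 1/2`.
-/

open MeasureTheory Filter Set

theorem sq_integral_norm_mul_norm_le {α E F : Type*} [MeasurableSpace α] {μ : Measure α}
    [NormedAddCommGroup E] [NormedAddCommGroup F] {f : α → E} {g : α → F}
    (hf : MemLp f 2 μ) (hg : MemLp g 2 μ) :
    (∫ a, ‖f a‖ * ‖g a‖ ∂μ) ^ 2 ≤ (∫ a, ‖f a‖ ^ 2 ∂μ) * ∫ a, ‖g a‖ ^ 2 ∂μ := by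
  have hofReal : ENNReal.ofReal 2 = 2 := by norm_num
  have holder := integral_mul_norm_le_Lp_mul_Lq (p := 2) (q := 2) Real.HolderConjugate.two_two
    (hofReal ▸ hf.norm) (hofReal ▸ hg.norm)
  simp only [norm_norm, Real.rpow_two, ← Real.sqrt_eq_rpow] at holder
  have hf2 : 0 ≤ ∫ a, ‖f a‖ ^ 2 ∂μ := integral_nonneg fun _ => by positivity
  have hg2 : 0 ≤ ∫ a, ‖g a‖ ^ 2 ∂μ := integral_nonneg fun _ => by positivity
  calc (∫ a, ‖f a‖ * ‖g a‖ ∂μ) ^ 2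
      ≤ (√(∫ a, ‖f a‖ ^ 2 ∂μ) * √(∫ a, ‖g a‖ ^ 2 ∂μ)) ^ 2 :=
        pow_le_pow_left₀ (integral_nonneg fun _ => by positivity) holder 2
    _ = _ := by rw [mul_pow, Real.sq_sqrt hf2, Real.sq_sqrt hg2]

theorem abs_le_integral_of_hasDerivAt {g g' m : ℝ → ℝ} (hderiv : ∀ t, HasDerivAt g (g' t) t)
    (hg : Integrable g) (hg'm : ∀ t, |g' t| ≤ m t) (hm : Integrable m) (x : ℝ) :
    |g x| ≤ ∫ t, m t := by
  have hg'_meas : AEStronglyMeasurable g' := by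
    rw [show g' = deriv g from funext fun t => (hderiv t).deriv.symm]
    exact (measurable_deriv g).aestronglyMeasurable
  have hg' : Integrable g' := hm.mono' hg'_meas (Eventually.of_forall hg'm)
  have hlim : Tendsto g atTop (nhds 0) :=
    tendsto_zero_of_hasDerivAt_of_integrableOn_Ioi (a := x) (fun t _ => hderiv t)
      hg'.integrableOn hg.integrableOn
  have hftc : ∫ t in Ioi x, g' t = 0 - g x :=
    integral_Ioi_of_hasDerivAt_of_tendsto' (fun t _ => hderiv t) hg'.integrableOn hlim
  calc |g x| = |∫ t in Ioi x, g' t| := by rw [hftc, zero_sub, abs_neg]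
    _ ≤ ∫ t in Ioi x, |g' t| := abs_integral_le_integral_abs
    _ ≤ ∫ t in Ioi x, m t := setIntegral_mono hg'.abs.integrableOn hm.integrableOn hg'm
    _ ≤ ∫ t, m t := setIntegral_le_integral hm
        (Eventually.of_forall fun t => (abs_nonneg _).trans (hg'm t))

theorem integral_sq_le_sq_integral_of_abs_le_slice_integrals {α β : Type*} [MeasurableSpace α]
    [MeasurableSpace β] {μ : Measure α} {ν : Measure β} [SFinite μ] [SFinite ν]
    {g m : α × β → ℝ} (hm : Integrable m (μ.prod ν))
    (h₁ : ∀ᵐ x ∂μ, ∀ y, |g (x, y)| ≤ ∫ y', m (x, y') ∂ν)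
    (h₂ : ∀ᵐ y ∂ν, ∀ x, |g (x, y)| ≤ ∫ x', m (x', y) ∂μ) :
    ∫ p, g p ^ 2 ∂(μ.prod ν) ≤ (∫ p, m p ∂(μ.prod ν)) ^ 2 := by
  by_cases hg : Integrable (fun p => g p ^ 2) (μ.prod ν)
  swap
  · rw [integral_undef hg]; positivity
  set B : α → ℝ := fun x => ∫ y, m (x, y) ∂ν
  set A : β → ℝ := fun y => ∫ x, m (x, y) ∂μ
  have hprod : ∀ᵐ p ∂(μ.prod ν), g p ^ 2 ≤ B p.1 * A p.2 := by
    filter_upwards [Measure.quasiMeasurePreserving_fst.tendsto_ae.eventually h₁,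
      Measure.quasiMeasurePreserving_snd.tendsto_ae.eventually h₂] with p h₁p h₂p
    rw [← sq_abs, sq]
    exact mul_le_mul (h₁p p.2) (h₂p p.1) (abs_nonneg _) ((abs_nonneg _).trans (h₁p p.2))
  calc ∫ p, g p ^ 2 ∂(μ.prod ν) ≤ ∫ p, B p.1 * A p.2 ∂(μ.prod ν) :=
        integral_mono_ae hg (hm.integral_prod_left.mul_prod hm.integral_prod_right) hprod
    _ = (∫ x, B x ∂μ) * ∫ y, A y ∂ν := integral_prod_mul B A
    _ = (∫ p, m p ∂(μ.prod ν)) ^ 2 := by rw [← integral_prod m hm, ← integral_prod_symm m hm, sq]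

section

variable {E F : Type*} [NormedAddCommGroup E] [NormedSpace ℝ E]
  [NormedAddCommGroup F] [InnerProductSpace ℝ F]

theorem hasDerivAt_norm_sq_comp {f : E → F} {γ : ℝ → E} {v : E} {t : ℝ}
    (hf : DifferentiableAt ℝ f (γ t)) (hγ : HasDerivAt γ v t) :
    HasDerivAt (fun s => ‖f (γ s)‖ ^ 2) (2 * inner ℝ (f (γ t)) (fderiv ℝ f (γ t) v)) t :=
  (hf.hasFDerivAt.comp_hasDerivAt t hγ).norm_sq

theorem abs_two_mul_inner_fderiv_le {f : E → F} (x v : E) (hv : ‖v‖ ≤ 1) :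
    |2 * inner ℝ (f x) (fderiv ℝ f x v)| ≤ 2 * (‖f x‖ * ‖fderiv ℝ f x‖) := by
  have hDv : ‖fderiv ℝ f x v‖ ≤ ‖fderiv ℝ f x‖ :=
    (fderiv ℝ f x).le_of_opNorm_le_of_le le_rfl hv |>.trans_eq (mul_one _)
  rw [abs_mul, abs_two]
  gcongr
  exact (abs_real_inner_le_norm _ _).trans (by gcongr)

theorem norm_sq_le_integral_along_curve {f : E → F} (hf : Differentiable ℝ f) {γ : ℝ → E}
    {v : E} (hγ : ∀ t, HasDerivAt γ v t) (hv : ‖v‖ ≤ 1)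
    (hf2 : Integrable fun t => ‖f (γ t)‖ ^ 2)
    (hm : Integrable fun t => 2 * (‖f (γ t)‖ * ‖fderiv ℝ f (γ t)‖)) (x : ℝ) :
    ‖f (γ x)‖ ^ 2 ≤ ∫ t, 2 * (‖f (γ t)‖ * ‖fderiv ℝ f (γ t)‖) := by
  rw [← abs_of_nonneg (sq_nonneg ‖f (γ x)‖)]
  exact abs_le_integral_of_hasDerivAt (fun t => hasDerivAt_norm_sq_comp (hf _) (hγ t)) hf2
    (fun t => abs_two_mul_inner_fderiv_le _ _ hv) hm x

noncomputable def planeCoordEquiv : (ℝ × ℝ) ≃L[ℝ] EuclideanSpace ℝ (Fin 2) :=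
  (ContinuousLinearEquiv.finTwoArrow ℝ ℝ).symm.trans (EuclideanSpace.equiv (Fin 2) ℝ).symm

theorem measurePreserving_planeCoordEquiv : MeasurePreserving planeCoordEquiv :=
  (PiLp.volume_preserving_toLp (Fin 2)).comp (volume_preserving_finTwoArrow ℝ).symm

theorem hasDerivAt_planeCoordEquiv_left (x y : ℝ) :
    HasDerivAt (fun t => planeCoordEquiv (t, y)) (planeCoordEquiv (1, 0)) x :=
  planeCoordEquiv.hasFDerivAt.comp_hasDerivAt x ((hasDerivAt_id x).prodMk (hasDerivAt_const x y))

theorem hasDerivAt_planeCoordEquiv_right (x y : ℝ) :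
    HasDerivAt (fun t => planeCoordEquiv (x, t)) (planeCoordEquiv (0, 1)) y :=
  planeCoordEquiv.hasFDerivAt.comp_hasDerivAt y ((hasDerivAt_const y x).prodMk (hasDerivAt_id y))

theorem norm_planeCoordEquiv_one_zero : ‖planeCoordEquiv (1, 0)‖ = 1 := by
  simp [planeCoordEquiv, EuclideanSpace.norm_eq, Fin.sum_univ_two]

theorem norm_planeCoordEquiv_zero_one : ‖planeCoordEquiv (0, 1)‖ = 1 := by
  simp [planeCoordEquiv, EuclideanSpace.norm_eq, Fin.sum_univ_two]

theorem integral_norm_pow_four_le {u : EuclideanSpace ℝ (Fin 2) → F} (hu : Differentiable ℝ u)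
    (hu2 : MemLp u 2) (hDu2 : MemLp (fderiv ℝ u) 2) :
    ∫ x, ‖u x‖ ^ 4 ≤ 4 * ((∫ x, ‖fderiv ℝ u x‖ ^ 2) * ∫ x, ‖u x‖ ^ 2) := by
  set e := planeCoordEquiv
  have he := measurePreserving_planeCoordEquiv
  have he_emb : MeasurableEmbedding e := e.toHomeomorph.measurableEmbedding
  set m : EuclideanSpace ℝ (Fin 2) → ℝ := fun x => 2 * (‖u x‖ * ‖fderiv ℝ u x‖)
  have hm : Integrable m := (hu2.norm.integrable_mul hDu2.norm).const_mul 2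
  have hm_e : Integrable (fun p => m (e p)) (volume.prod volume) := by
    rw [← Measure.volume_eq_prod]; exact he.integrable_comp_of_integrable hm
  have hu2_e : Integrable (fun p => ‖u (e p)‖ ^ 2) (volume.prod volume) := by
    rw [← Measure.volume_eq_prod]
    exact he.integrable_comp_of_integrable (hu2.integrable_norm_pow two_ne_zero)
  have h₁ : ∀ᵐ x, ∀ y, |‖u (e (x, y))‖ ^ 2| ≤ ∫ y', m (e (x, y')) := by
    filter_upwards [hm_e.prod_right_ae, hu2_e.prod_right_ae] with x hmx hux y
    rw [abs_of_nonneg (by positivity)]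
    exact norm_sq_le_integral_along_curve hu (hasDerivAt_planeCoordEquiv_right x)
      norm_planeCoordEquiv_zero_one.le hux hmx y
  have h₂ : ∀ᵐ y, ∀ x, |‖u (e (x, y))‖ ^ 2| ≤ ∫ x', m (e (x', y)) := by
    filter_upwards [hm_e.prod_left_ae, hu2_e.prod_left_ae] with y hmy huy x
    rw [abs_of_nonneg (by positivity)]
    exact norm_sq_le_integral_along_curve hu (fun t => hasDerivAt_planeCoordEquiv_left t y)
      norm_planeCoordEquiv_one_zero.le huy hmy x
  have hfubini := integral_sq_le_sq_integral_of_abs_le_slice_integrals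
    (g := fun p => ‖u (e p)‖ ^ 2) hm_e h₁ h₂
  simp only [← pow_mul, ← Measure.volume_eq_prod] at hfubini
  rw [he.integral_comp he_emb (fun x => ‖u x‖ ^ (2 * 2)), he.integral_comp he_emb m,
    integral_const_mul, mul_pow] at hfubini
  have hcs := sq_integral_norm_mul_norm_le hu2 hDu2
  linarith

end

/-- **Gagliardo–Nirenberg in 2D.** There is a constant `a* > 0` such
that for every `u ∈ H¹(ℝ²)`,
`(∫ |∇u|²) (∫ |u|²) ≥ (a*/2) ∫ |u|⁴`. -/
theorem gagliardo_nirenberg_two_dim :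
    ∃ aStar : ℝ, 0 < aStar ∧
      ∀ u : EuclideanSpace ℝ (Fin 2) → ℂ,
        MemLp u 2 (volume : Measure (EuclideanSpace ℝ (Fin 2))) →
        Differentiable ℝ u →
        MemLp (fun x => fderiv ℝ u x) 2
          (volume : Measure (EuclideanSpace ℝ (Fin 2))) →
        MemLp u 4 (volume : Measure (EuclideanSpace ℝ (Fin 2))) →
        (∫ x, ‖fderiv ℝ u x‖ ^ 2) * (∫ x, ‖u x‖ ^ 2) ≥
          (aStar / 2) * ∫ x, ‖u x‖ ^ 4 := by
  refine ⟨1 / 2, by norm_num, fun u hu2 hu hDu2 _ => ?_⟩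
  have := integral_norm_pow_four_le hu hu2 hDu2
  linarith
end

section
/- Let w ∈ L^1(R^2) with w even and ∫_{R^2} max(0, -w(x)) dx < a*, where a* is the optimal Gagliardo–Nirenberg constant (the largest constant such that ‖∇u‖_2^2‖u‖_2^2 ≥ (a*/2)‖u‖_4^4 for all u ∈ H^1(R^2)). Then w is strictly Hartree stable: inf over u ∈ H^1(R^2), u ≠ 0, of [∫∫ w(x-y)|u(x)|^2|u(y)|^2 dx dy] / [2 ‖u‖_{L^2}^2 ‖∇u‖_{L^2}^2] > -1. -/
/-!
Bound `w` below by `-w⁻`, `w⁻ = max 0 (-w)`. For a nonnegative kernel `k` and `f ≥ 0`, the AM-GM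
inequality `2 f(x) f(y) ≤ f(x)² + f(y)²` and translation invariance of the measure give
`∬ k(x - y) f(x) f(y) ≤ ‖k‖₁ ‖f‖₂²`. With `f = |u|²` this yields
`∬ w(x - y) |u(x)|² |u(y)|² ≥ -‖w⁻‖₁ ‖u‖₄⁴`, and Gagliardo–Nirenberg bounds `‖u‖₄⁴` by
`(2 / a*) ‖u‖₂² ‖∇u‖₂²`, so `ε = 1 - ‖w⁻‖₁ / a*` works.
-/

open MeasureTheory
open scoped ENNReal

theorem neg_integral_le_integral_of_neg_le {α : Type*} [MeasurableSpace α] {μ : Measure α}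
    {g h : α → ℝ} (h0 : 0 ≤ᵐ[μ] h) (hle : ∀ᵐ x ∂μ, -h x ≤ g x)
    (hint : Integrable g μ → Integrable h μ) : -∫ x, h x ∂μ ≤ ∫ x, g x ∂μ := by
  by_cases hg : Integrable g μ
  · rw [← integral_neg]
    exact integral_mono_ae (hint hg).neg hg hle
  · rw [integral_undef hg, neg_nonpos]
    exact integral_nonneg_of_ae h0

theorem ENNReal.two_mul_le_add_sq (a b : ℝ≥0∞) : 2 * a * b ≤ a ^ 2 + b ^ 2 := by
  rcases eq_or_ne a ⊤ with rfl | ha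
  · simp
  rcases eq_or_ne b ⊤ with rfl | hb
  · simp
  lift a to NNReal using ha
  lift b to NNReal using hb
  exact_mod_cast _root_.two_mul_le_add_sq a b

section

variable {G : Type*} [MeasurableSpace G] [AddCommGroup G] [MeasurableAdd₂ G] [MeasurableNeg G]
  {μ : Measure G} [SFinite μ] [μ.IsAddLeftInvariant]

theorem lintegral_lintegral_sub_mul_le [μ.IsNegInvariant] {k F : G → ℝ≥0∞}
    (hk : Measurable k) (hF : Measurable F) :
    ∫⁻ x, ∫⁻ y, k (x - y) * F x * F y ∂μ ∂μ ≤ (∫⁻ z, k z ∂μ) * ∫⁻ x, F x ^ 2 ∂μ := by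
  have hk' : Measurable fun p : G × G => k (p.1 - p.2) := hk.comp measurable_sub
  have diag : ∫⁻ x, ∫⁻ y, k (x - y) * F x ^ 2 ∂μ ∂μ = (∫⁻ z, k z ∂μ) * ∫⁻ x, F x ^ 2 ∂μ := by
    have inner (x : G) : ∫⁻ y, k (x - y) * F x ^ 2 ∂μ = (∫⁻ z, k z ∂μ) * F x ^ 2 := by
      rw [lintegral_mul_const _ (by fun_prop), lintegral_sub_left_eq_self]
    simp_rw [inner]
    exact lintegral_const_mul _ (hF.pow_const 2)
  have antidiag :
      ∫⁻ x, ∫⁻ y, k (x - y) * F y ^ 2 ∂μ ∂μ = (∫⁻ z, k z ∂μ) * ∫⁻ x, F x ^ 2 ∂μ := by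
    have inner (y : G) : ∫⁻ x, k (x - y) * F y ^ 2 ∂μ = (∫⁻ z, k z ∂μ) * F y ^ 2 := by
      rw [lintegral_mul_const _ (by fun_prop), lintegral_sub_right_eq_self]
    rw [lintegral_lintegral_swap (hk'.mul ((hF.pow_const 2).comp measurable_snd)).aemeasurable]
    simp_rw [inner]
    exact lintegral_const_mul _ (hF.pow_const 2)
  refine (ENNReal.mul_le_mul_iff_right two_ne_zero ENNReal.ofNat_ne_top).1 ?_
  calc 2 * ∫⁻ x, ∫⁻ y, k (x - y) * F x * F y ∂μ ∂μ
      = ∫⁻ x, ∫⁻ y, k (x - y) * (2 * F x * F y) ∂μ ∂μ := by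
        rw [← lintegral_const_mul' _ _ ENNReal.ofNat_ne_top]
        congr! 2 with x
        rw [← lintegral_const_mul' _ _ ENNReal.ofNat_ne_top]
        congr! 2 with y
        ring
    _ ≤ ∫⁻ x, ∫⁻ y, k (x - y) * F x ^ 2 + k (x - y) * F y ^ 2 ∂μ ∂μ := by
        gcongr with x y
        rw [← mul_add]
        gcongr
        exact ENNReal.two_mul_le_add_sq _ _
    _ = ∫⁻ x, ∫⁻ y, k (x - y) * F x ^ 2 ∂μ ∂μ + ∫⁻ x, ∫⁻ y, k (x - y) * F y ^ 2 ∂μ ∂μ := by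
        rw [← lintegral_add_left]
        · exact lintegral_congr fun x => lintegral_add_left (by fun_prop) _
        · exact (hk'.mul ((hF.pow_const 2).comp measurable_fst)).lintegral_prod_right'
    _ = 2 * ((∫⁻ z, k z ∂μ) * ∫⁻ x, F x ^ 2 ∂μ) := by rw [diag, antidiag, two_mul]

theorem lintegral_prod_ofReal_sub_mul_le [μ.IsNegInvariant] {k f : G → ℝ}
    (hk : Measurable k) (hf : Measurable f) (hk0 : 0 ≤ k) (hf0 : 0 ≤ f) (hki : Integrable k μ)
    (hf2 : Integrable (fun x => f x ^ 2) μ) :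
    ∫⁻ p : G × G, ENNReal.ofReal (k (p.1 - p.2) * f p.1 * f p.2) ∂μ.prod μ ≤
      ENNReal.ofReal ((∫ z, k z ∂μ) * ∫ x, f x ^ 2 ∂μ) := by
  have hsq : 0 ≤ᵐ[μ] fun x => f x ^ 2 := ae_of_all _ fun x => sq_nonneg _
  rw [lintegral_prod _ (by fun_prop), ENNReal.ofReal_mul (integral_nonneg hk0),
    ofReal_integral_eq_lintegral_ofReal hki (ae_of_all _ hk0),
    ofReal_integral_eq_lintegral_ofReal hf2 hsq]
  simp_rw [ENNReal.ofReal_mul (mul_nonneg (hk0 _) (hf0 _)), ENNReal.ofReal_mul (hk0 _),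
    ENNReal.ofReal_pow (hf0 _)]
  exact lintegral_lintegral_sub_mul_le hk.ennreal_ofReal hf.ennreal_ofReal

theorem integrable_prod_sub_mul [μ.IsNegInvariant] {k f : G → ℝ}
    (hk : Measurable k) (hf : Measurable f) (hk0 : 0 ≤ k) (hf0 : 0 ≤ f) (hki : Integrable k μ)
    (hf2 : Integrable (fun x => f x ^ 2) μ) :
    Integrable (fun p : G × G => k (p.1 - p.2) * f p.1 * f p.2) (μ.prod μ) := by
  refine ⟨by fun_prop, (hasFiniteIntegral_iff_ofReal ?_).2 ?_⟩
  · exact ae_of_all _ fun p => mul_nonneg (mul_nonneg (hk0 _) (hf0 _)) (hf0 _)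
  · exact (lintegral_prod_ofReal_sub_mul_le hk hf hk0 hf0 hki hf2).trans_lt ENNReal.ofReal_lt_top

theorem integral_integral_sub_mul_le [μ.IsNegInvariant] {k f : G → ℝ}
    (hk : Measurable k) (hf : Measurable f) (hk0 : 0 ≤ k) (hf0 : 0 ≤ f) (hki : Integrable k μ)
    (hf2 : Integrable (fun x => f x ^ 2) μ) :
    ∫ x, ∫ y, k (x - y) * f x * f y ∂μ ∂μ ≤ (∫ z, k z ∂μ) * ∫ x, f x ^ 2 ∂μ := by
  rw [integral_integral (integrable_prod_sub_mul hk hf hk0 hf0 hki hf2),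
    integral_eq_lintegral_of_nonneg_ae
      (ae_of_all _ fun p => mul_nonneg (mul_nonneg (hk0 _) (hf0 _)) (hf0 _)) (by fun_prop)]
  exact ENNReal.toReal_le_of_le_ofReal
    (mul_nonneg (integral_nonneg hk0) (integral_nonneg fun x => sq_nonneg _))
    (lintegral_prod_ofReal_sub_mul_le hk hf hk0 hf0 hki hf2)

theorem neg_mul_le_integral_integral_sub_mul_of_measurable [μ.IsNegInvariant] {w f : G → ℝ}
    (hw : Measurable w) (hf : Measurable f) (hwi : Integrable w μ) (hf0 : 0 ≤ f)
    (hf2 : Integrable (fun x => f x ^ 2) μ) :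
    -((∫ z, max 0 (-w z) ∂μ) * ∫ x, f x ^ 2 ∂μ) ≤ ∫ x, ∫ y, w (x - y) * f x * f y ∂μ ∂μ := by
  set wn : G → ℝ := fun z => max 0 (-w z)
  have hwn : Measurable wn := by fun_prop
  have hwn0 : 0 ≤ wn := fun z => le_max_left _ _
  have hwni : Integrable wn μ := hwi.neg.pos_part.congr (ae_of_all _ fun z => max_comm _ _)
  have hprod0 (x y : G) : 0 ≤ wn (x - y) * f x * f y :=
    mul_nonneg (mul_nonneg (hwn0 _) (hf0 _)) (hf0 _)
  have hpt (x y : G) : -(wn (x - y) * f x * f y) ≤ w (x - y) * f x * f y := by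
    have hff := mul_nonneg (hf0 x) (hf0 y)
    have hw_ge : -wn (x - y) ≤ w (x - y) := neg_le.1 (le_max_right _ _)
    nlinarith
  have hnorm (x y : G) : ‖wn (x - y) * f x * f y‖ ≤ ‖w (x - y) * f x * f y‖ := by
    simp only [norm_mul]
    gcongr
    rw [Real.norm_of_nonneg (hwn0 _), Real.norm_eq_abs]
    exact max_le (abs_nonneg _) (neg_le_abs _)
  have hinner (x : G) : -∫ y, wn (x - y) * f x * f y ∂μ ≤ ∫ y, w (x - y) * f x * f y ∂μ :=
    neg_integral_le_integral_of_neg_le (ae_of_all _ (hprod0 x)) (ae_of_all _ (hpt x))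
      fun hint => hint.mono (by fun_prop) (ae_of_all _ (hnorm x))
  calc -((∫ z, wn z ∂μ) * ∫ x, f x ^ 2 ∂μ)
      ≤ -∫ x, ∫ y, wn (x - y) * f x * f y ∂μ ∂μ :=
        neg_le_neg (integral_integral_sub_mul_le hwn hf hwn0 hf0 hwni hf2)
    _ ≤ ∫ x, ∫ y, w (x - y) * f x * f y ∂μ ∂μ :=
        neg_integral_le_integral_of_neg_le
          (ae_of_all _ fun x => integral_nonneg (hprod0 x)) (ae_of_all _ hinner)
          fun _ => (integrable_prod_sub_mul hwn hf hwn0 hf0 hwni hf2).integral_prod_left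

theorem integral_integral_sub_mul_congr_ae {w w' f f' : G → ℝ} (hw : w =ᵐ[μ] w')
    (hf : f =ᵐ[μ] f') :
    ∫ x, ∫ y, w (x - y) * f x * f y ∂μ ∂μ = ∫ x, ∫ y, w' (x - y) * f' x * f' y ∂μ ∂μ := by
  have hsub : ∀ᵐ x ∂μ, ∀ᵐ y ∂μ, w (x - y) = w' (x - y) :=
    Measure.ae_ae_of_ae_prod ((quasiMeasurePreserving_sub μ μ).ae_eq_comp hw)
  refine integral_congr_ae ?_
  filter_upwards [hsub, hf] with x hwx hfx
  refine integral_congr_ae ?_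
  filter_upwards [hwx, hf] with y hwy hfy
  rw [hwy, hfx, hfy]

theorem neg_mul_le_integral_integral_sub_mul [μ.IsNegInvariant] {w f : G → ℝ}
    (hwi : Integrable w μ) (hf : AEStronglyMeasurable f μ) (hf0 : 0 ≤ᵐ[μ] f)
    (hf2 : Integrable (fun x => f x ^ 2) μ) :
    -((∫ z, max 0 (-w z) ∂μ) * ∫ x, f x ^ 2 ∂μ) ≤ ∫ x, ∫ y, w (x - y) * f x * f y ∂μ ∂μ := by
  have hww' : w =ᵐ[μ] hwi.1.mk w := hwi.1.ae_eq_mk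
  have hff' : f =ᵐ[μ] fun x => |hf.mk f x| := by
    filter_upwards [hf.ae_eq_mk, hf0] with x hx hx0
    rw [← hx, abs_of_nonneg hx0]
  have hneg : (fun z => max 0 (-w z)) =ᵐ[μ] fun z => max 0 (-hwi.1.mk w z) :=
    hww'.fun_comp fun t => max 0 (-t)
  have hsq : (fun x => f x ^ 2) =ᵐ[μ] fun x => |hf.mk f x| ^ 2 := hff'.fun_comp (· ^ 2)
  rw [integral_congr_ae hneg, integral_congr_ae hsq,
    integral_integral_sub_mul_congr_ae hww' hff']
  exact neg_mul_le_integral_integral_sub_mul_of_measurable hwi.1.measurable_mk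
    hf.measurable_mk.abs (hwi.congr hww') (fun x => abs_nonneg _) (hf2.congr hsq)

end

theorem strict_hartree_stability_of_small_negative_part_general
    (aStar : ℝ) (haStar : 0 < aStar)
    (hGN : ∀ u : EuclideanSpace ℝ (Fin 2) → ℂ,
      MemLp u 2 (volume : Measure (EuclideanSpace ℝ (Fin 2))) →
      Differentiable ℝ u →
      MemLp (fun x => fderiv ℝ u x) 2 (volume : Measure (EuclideanSpace ℝ (Fin 2))) →
      MemLp u 4 (volume : Measure (EuclideanSpace ℝ (Fin 2))) →
      (∫ x, ‖fderiv ℝ u x‖ ^ 2) * (∫ x, ‖u x‖ ^ 2) ≥ (aStar / 2) * ∫ x, ‖u x‖ ^ 4)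
    (w : EuclideanSpace ℝ (Fin 2) → ℝ)
    (hw1 : Integrable w (volume : Measure (EuclideanSpace ℝ (Fin 2))))
    (hwneg : ∫ x, max 0 (-w x) < aStar) :
    ∃ ε : ℝ, 0 < ε ∧
      ∀ u : EuclideanSpace ℝ (Fin 2) → ℂ,
        MemLp u 2 (volume : Measure (EuclideanSpace ℝ (Fin 2))) →
        Differentiable ℝ u →
        MemLp (fun x => fderiv ℝ u x) 2 (volume : Measure (EuclideanSpace ℝ (Fin 2))) →
        MemLp u 4 (volume : Measure (EuclideanSpace ℝ (Fin 2))) →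
        ∫ x, ∫ y, w (x - y) * ‖u x‖ ^ 2 * ‖u y‖ ^ 2 ≥
          (-1 + ε) * (2 * (∫ x, ‖u x‖ ^ 2) * ∫ x, ‖fderiv ℝ u x‖ ^ 2) := by
  set I := ∫ x, max 0 (-w x)
  refine ⟨1 - I / aStar, sub_pos.2 ((div_lt_one haStar).2 hwneg), fun u hu2 hud hud2 hu4 => ?_⟩
  have hu4' : Integrable (fun x => (‖u x‖ ^ 2) ^ 2) := by
    simpa only [← pow_mul] using hu4.integrable_norm_pow four_ne_zero
  have hHartree := neg_mul_le_integral_integral_sub_mul (f := fun x => ‖u x‖ ^ 2) hw1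
    (hu2.1.norm.pow 2) (ae_of_all _ fun x => sq_nonneg ‖u x‖) hu4'
  simp only [← pow_mul, Nat.reduceMul] at hHartree
  have hGNu := hGN u hu2 hud hud2 hu4
  calc (-1 + (1 - I / aStar)) * (2 * (∫ x, ‖u x‖ ^ 2) * ∫ x, ‖fderiv ℝ u x‖ ^ 2)
      = -(I / aStar * (2 * ((∫ x, ‖fderiv ℝ u x‖ ^ 2) * ∫ x, ‖u x‖ ^ 2))) := by ring
    _ ≤ -(I / aStar * (aStar * ∫ x, ‖u x‖ ^ 4)) :=
        neg_le_neg (mul_le_mul_of_nonneg_left (by linarith) (by positivity))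
    _ = -(I * ∫ x, ‖u x‖ ^ 4) := by field_simp
    _ ≤ _ := hHartree

/-- Let `w ∈ L¹(ℝ²)` be even with `∫ w⁻ < a*`, where `a*` is the
optimal Gagliardo–Nirenberg constant. Then `w` is strictly Hartree stable: there is
`ε > 0` with `∬ w(x-y)|u(x)|²|u(y)|² ≥ (-1+ε) · 2 ‖u‖₂² ‖∇u‖₂²` for all
`u ∈ H¹(ℝ²)` (this is the inequality `inf ≥ -1 + ε > -1` with the denominator
cleared). -/
theorem strict_hartree_stability_of_small_negative_part
    (aStar : ℝ) (haStar : 0 < aStar)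
    (hGN : ∀ u : EuclideanSpace ℝ (Fin 2) → ℂ,
      MemLp u 2 (volume : Measure (EuclideanSpace ℝ (Fin 2))) →
      Differentiable ℝ u →
      MemLp (fun x => fderiv ℝ u x) 2 (volume : Measure (EuclideanSpace ℝ (Fin 2))) →
      MemLp u 4 (volume : Measure (EuclideanSpace ℝ (Fin 2))) →
      (∫ x, ‖fderiv ℝ u x‖ ^ 2) * (∫ x, ‖u x‖ ^ 2) ≥ (aStar / 2) * ∫ x, ‖u x‖ ^ 4)
    (hopt : ∀ b : ℝ,
      (∀ u : EuclideanSpace ℝ (Fin 2) → ℂ,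
        MemLp u 2 (volume : Measure (EuclideanSpace ℝ (Fin 2))) →
        Differentiable ℝ u →
        MemLp (fun x => fderiv ℝ u x) 2 (volume : Measure (EuclideanSpace ℝ (Fin 2))) →
        MemLp u 4 (volume : Measure (EuclideanSpace ℝ (Fin 2))) →
        (∫ x, ‖fderiv ℝ u x‖ ^ 2) * (∫ x, ‖u x‖ ^ 2) ≥ (b / 2) * ∫ x, ‖u x‖ ^ 4) →
      b ≤ aStar)
    (w : EuclideanSpace ℝ (Fin 2) → ℝ)
    (hw1 : Integrable w (volume : Measure (EuclideanSpace ℝ (Fin 2))))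
    (hweven : ∀ x, w (-x) = w x)
    (hwneg : ∫ x, max 0 (-w x) < aStar) :
    ∃ ε : ℝ, 0 < ε ∧
      ∀ u : EuclideanSpace ℝ (Fin 2) → ℂ,
        MemLp u 2 (volume : Measure (EuclideanSpace ℝ (Fin 2))) →
        Differentiable ℝ u →
        MemLp (fun x => fderiv ℝ u x) 2 (volume : Measure (EuclideanSpace ℝ (Fin 2))) →
        MemLp u 4 (volume : Measure (EuclideanSpace ℝ (Fin 2))) →
        ∫ x, ∫ y, w (x - y) * ‖u x‖ ^ 2 * ‖u y‖ ^ 2 ≥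
          (-1 + ε) * (2 * (∫ x, ‖u x‖ ^ 2) * ∫ x, ‖fderiv ℝ u x‖ ^ 2) :=
  strict_hartree_stability_of_small_negative_part_general aStar haStar hGN w hw1 hwneg
end
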